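/- arXiv:1612.08982 — 4 statements merged into one kernel-verified Lean document; each statement's English description precedes it below -/
import Mathlib

section
/- If s̄ ∈ (a,b) satisfies F(s̄) ≤ F(s) for every s ∈ (a,b), then the first-order optimality condition ⟨S(s̄) − u_d, u^{(1)}(s̄)⟩ + φ'(s̄) = 0 holds, where ⟨·,·⟩ is the inner product of H. -/
/-!
The map `S` is differentiable at `s̄` with derivative `u¹(s̄)` in `ℓ²`: in each
coordinate, convexity of `exp` bounds the second-order Taylor remainder of `s ↦ λ^{-s}` at `s̄` by
`(s - s̄)² (log λ)² (λ^{-s̄} + λ^{-s})`, and `(log λ)² λ^{-t}` is bounded uniformly in `λ ≥ λ₁` as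
long as `t` stays in a compact subset of `(0, ∞)`; so the remainder is `O((s - s̄)²) ‖f‖` in `ℓ²`.
Then `F` is differentiable at the interior minimiser `s̄`, and Fermat's rule gives `F'(s̄) = 0`.
-/

open Real Filter Topology
open scoped ENNReal RealInnerProductSpace

theorem abs_exp_sub_exp_sub_mul_exp_le (x y : ℝ) :
    |exp y - exp x - (y - x) * exp x| ≤ (y - x) ^ 2 * (exp x + exp y) := by
  have hxy : exp x * (y - x + 1) ≤ exp y := by
    simpa [← exp_add] using mul_le_mul_of_nonneg_left (add_one_le_exp (y - x)) (exp_pos x).le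
  have hyx : exp y * (x - y + 1) ≤ exp x := by
    simpa [← exp_add] using mul_le_mul_of_nonneg_left (add_one_le_exp (x - y)) (exp_pos y).le
  rw [abs_of_nonneg (by linarith)]
  rcases le_total x y with h | h
  · have hsub : exp y - exp x ≤ (y - x) * exp y := by linarith
    nlinarith [exp_pos x, mul_le_mul_of_nonneg_left hsub (sub_nonneg.2 h)]
  · nlinarith [exp_pos x, exp_pos y]

theorem abs_rpow_neg_sub_rpow_neg_sub_le {l : ℝ} (hl : 0 < l) (s σ : ℝ) :
    |l ^ (-s) - l ^ (-σ) - (s - σ) * (-log l * l ^ (-σ))| ≤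
      (s - σ) ^ 2 * (log l ^ 2 * l ^ (-σ) + log l ^ 2 * l ^ (-s)) := by
  have h := abs_exp_sub_exp_sub_mul_exp_le (log l * -σ) (log l * -s)
  rw [← rpow_def_of_pos hl, ← rpow_def_of_pos hl] at h
  convert h using 1 <;> [(congr 1; ring); ring]

theorem log_sq_mul_rpow_neg_le {m l s s₀ s₁ : ℝ} (hm : 0 < m) (hml : m ≤ l) (hs₀ : 0 < s₀)
    (h₀ : s₀ ≤ s) (h₁ : s ≤ s₁) :
    log l ^ 2 * l ^ (-s) ≤ 4 / s₀ ^ 2 + log m ^ 2 * m ^ (-s₁) := by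
  have hl : 0 < l := hm.trans_le hml
  have hA : 0 ≤ 4 / s₀ ^ 2 := by positivity
  have hB : 0 ≤ log m ^ 2 * m ^ (-s₁) := by positivity
  rcases le_or_gt 1 l with h1 | h1
  · have hlog : log l ≤ l ^ (s₀ / 2) / (s₀ / 2) := log_le_rpow_div hl.le (by linarith)
    have hsq : log l ^ 2 ≤ 4 / s₀ ^ 2 * l ^ s₀ := by
      calc log l ^ 2 ≤ (l ^ (s₀ / 2) / (s₀ / 2)) ^ 2 := pow_le_pow_left₀ (log_nonneg h1) hlog 2
        _ = 4 / s₀ ^ 2 * l ^ s₀ := by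
          rw [div_pow, ← rpow_natCast, ← rpow_mul hl.le]; ring_nf
    calc log l ^ 2 * l ^ (-s) ≤ 4 / s₀ ^ 2 * l ^ s₀ * l ^ (-s₀) := by
          gcongr
      _ = 4 / s₀ ^ 2 := by rw [mul_assoc, ← rpow_add hl]; simp
      _ ≤ _ := le_add_of_nonneg_right hB
  · have hsq : log l ^ 2 ≤ log m ^ 2 := by
      have := log_le_log hm hml
      have := log_nonpos hl.le h1.le
      nlinarith
    have hpow : l ^ (-s) ≤ m ^ (-s₁) :=
      calc l ^ (-s) ≤ l ^ (-s₁) := rpow_le_rpow_of_exponent_ge hl h1.le (by linarith)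
        _ ≤ m ^ (-s₁) := rpow_le_rpow_of_nonpos hm hml (by linarith)
    calc log l ^ 2 * l ^ (-s) ≤ log m ^ 2 * m ^ (-s₁) := by gcongr
      _ ≤ _ := le_add_of_nonneg_left hA

theorem hasDerivAt_of_norm_sub_sub_smul_le {E : Type*} [NormedAddCommGroup E] [NormedSpace ℝ E]
    {g : ℝ → E} {v : E} {x : ℝ} (C : ℝ)
    (h : ∀ᶠ s in 𝓝 x, ‖g s - g x - (s - x) • v‖ ≤ C * (s - x) ^ 2) : HasDerivAt g v x := by
  rw [hasDerivAt_iff_isLittleO]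
  refine Asymptotics.IsBigO.trans_isLittleO ?_ (Asymptotics.isLittleO_pow_sub_sub x one_lt_two)
  refine Asymptotics.IsBigO.of_bound C ?_
  filter_upwards [h] with s hs
  simpa [Real.norm_eq_abs, sq_abs] using hs

namespace lp

variable {α : Type*} {E : α → Type*} [∀ i, NormedAddCommGroup (E i)] {p : ℝ≥0∞}

theorem norm_le_mul_norm_of_forall_norm_le (hp : p ≠ 0) {g f : lp E p} {c : ℝ} (hc : 0 ≤ c)
    (h : ∀ i, ‖g i‖ ≤ c * ‖f i‖) : ‖g‖ ≤ c * ‖f‖ := by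
  rcases eq_or_ne p ∞ with rfl | hp'
  · exact norm_le_of_forall_le (mul_nonneg hc (norm_nonneg' f)) fun i =>
      (h i).trans (mul_le_mul_of_nonneg_left (norm_apply_le_norm hp f i) hc)
  have hp₀ : 0 < p.toReal := ENNReal.toReal_pos hp hp'
  refine norm_le_of_forall_sum_le hp₀ (mul_nonneg hc (norm_nonneg' f)) fun A => ?_
  calc ∑ i ∈ A, ‖g i‖ ^ p.toReal ≤ ∑ i ∈ A, c ^ p.toReal * ‖f i‖ ^ p.toReal := by
        gcongr with i
        rw [← mul_rpow hc (norm_nonneg _)]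
        gcongr
        exact h i
    _ ≤ c ^ p.toReal * ‖f‖ ^ p.toReal := by
        rw [← Finset.mul_sum]; gcongr; exact sum_rpow_le_norm_rpow hp₀ f A
    _ = (c * ‖f‖) ^ p.toReal := (mul_rpow hc (norm_nonneg' f)).symm

theorem hasDerivAt_of_apply_eq_rpow_neg_mul {ι : Type*} [Fact (1 ≤ p)]
    {m σ : ℝ} {lam : ι → ℝ} {f v : lp (fun _ : ι => ℝ) p} {S : ℝ → lp (fun _ : ι => ℝ) p}
    (hm : 0 < m) (hlam : ∀ i, m ≤ lam i) (hσ : 0 < σ)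
    (hS : ∀ᶠ s in 𝓝 σ, ∀ i, S s i = lam i ^ (-s) * f i)
    (hv : ∀ i, v i = -log (lam i) * lam i ^ (-σ) * f i) : HasDerivAt S v σ := by
  set C := 4 / (σ / 2) ^ 2 + log m ^ 2 * m ^ (-(σ + 1))
  have hσS : ∀ i, S σ i = lam i ^ (-σ) * f i := hS.self_of_nhds
  refine hasDerivAt_of_norm_sub_sub_smul_le (2 * C * ‖f‖) ?_
  filter_upwards [hS, Ioo_mem_nhds (half_lt_self hσ) (lt_add_one σ)] with s hSs hs
  have hC : ∀ i, ∀ t ∈ Set.Icc (σ / 2) (σ + 1), log (lam i) ^ 2 * lam i ^ (-t) ≤ C :=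
    fun i t ht => log_sq_mul_rpow_neg_le hm (hlam i) (half_pos hσ) ht.1 ht.2
  have hcoord : ∀ i, ‖(S s - S σ - (s - σ) • v) i‖ ≤ 2 * C * (s - σ) ^ 2 * ‖f i‖ := by
    intro i
    have hl : 0 < lam i := hm.trans_le (hlam i)
    have hr := abs_rpow_neg_sub_rpow_neg_sub_le hl s σ
    have hCσ := hC i σ ⟨by linarith, by linarith⟩
    have hCs := hC i s ⟨hs.1.le, hs.2.le⟩
    calc ‖(S s - S σ - (s - σ) • v) i‖
        = |lam i ^ (-s) - lam i ^ (-σ) - (s - σ) * (-log (lam i) * lam i ^ (-σ))| * |f i| := by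
          simp only [lp.coeFn_sub, lp.coeFn_smul, Pi.sub_apply, Pi.smul_apply, smul_eq_mul,
            hSs, hσS, hv, Real.norm_eq_abs, ← abs_mul]
          ring_nf
      _ ≤ (s - σ) ^ 2 * (C + C) * |f i| := by gcongr; exact hr.trans (by gcongr)
      _ = 2 * C * (s - σ) ^ 2 * ‖f i‖ := by rw [Real.norm_eq_abs]; ring
  calc ‖S s - S σ - (s - σ) • v‖ ≤ 2 * C * (s - σ) ^ 2 * ‖f‖ :=
        lp.norm_le_mul_norm_of_forall_norm_le (zero_lt_one.trans_le Fact.out).ne'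
          (by positivity) hcoord
    _ = 2 * C * ‖f‖ * (s - σ) ^ 2 := by ring

end lp

theorem first_order_optimality_general (lam1 : ℝ) (hlam1 : 0 < lam1) (lam : ℕ → ℝ)
    (hlam : ∀ k, lam1 ≤ lam k) (f : lp (fun _ : ℕ => ℝ) 2)
    (S : ℝ → lp (fun _ : ℕ => ℝ) 2)
    (hS : ∀ s ∈ Set.Ioo (0 : ℝ) 1, ∀ k, S s k = lam k ^ (-s) * f k)
    (u1 : ℝ → lp (fun _ : ℕ => ℝ) 2)
    (hu1 : ∀ s ∈ Set.Ioo (0 : ℝ) 1, ∀ k,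
      u1 s k = -(Real.log (lam k)) * lam k ^ (-s) * f k)
    (ud : lp (fun _ : ℕ => ℝ) 2) (a b : ℝ) (ha : 0 ≤ a) (hb : b ≤ 1)
    (φ φ' : ℝ → ℝ)
    (hφd : ∀ s ∈ Set.Ioo a b, HasDerivAt φ (φ' s) s)
    (F : ℝ → ℝ) (hF : ∀ s ∈ Set.Ioo a b, F s = 1 / 2 * ‖S s - ud‖ ^ 2 + φ s)
    (sbar : ℝ) (hsbar : sbar ∈ Set.Ioo a b)
    (hmin : ∀ s ∈ Set.Ioo a b, F sbar ≤ F s) :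
    ⟪S sbar - ud, u1 sbar⟫ + φ' sbar = 0 := by
  have hσ : sbar ∈ Set.Ioo (0 : ℝ) 1 := ⟨ha.trans_lt hsbar.1, hsbar.2.trans_le hb⟩
  have hnhds : Set.Ioo a b ∈ 𝓝 sbar := isOpen_Ioo.mem_nhds hsbar
  have hSd : HasDerivAt S (u1 sbar) sbar :=
    lp.hasDerivAt_of_apply_eq_rpow_neg_mul hlam1 hlam hσ.1
      (eventually_of_mem (isOpen_Ioo.mem_nhds hσ) hS) (hu1 sbar hσ)
  have hFd : HasDerivAt F (⟪S sbar - ud, u1 sbar⟫ + φ' sbar) sbar := by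
    have hcost := ((hSd.sub_const ud).norm_sq.const_mul (1 / 2)).add (hφd sbar hsbar)
    refine (hcost.congr_of_eventuallyEq ?_).congr_deriv (by ring)
    filter_upwards [hnhds] with s hs using hF s hs
  exact IsLocalMin.hasDerivAt_eq_zero (eventually_of_mem hnhds hmin) hFd

/-- First-order necessary optimality condition: if `s̄ ∈ (a,b)` minimizes the reduced cost
functional `F(s) = ½‖S(s) − u_d‖² + φ(s)` over `(a,b)`, then
`⟨S(s̄) − u_d, u¹(s̄)⟩ + φ'(s̄) = 0`. -/
theorem first_order_optimality (lam1 : ℝ) (hlam1 : 0 < lam1) (lam : ℕ → ℝ)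
    (hlam : ∀ k, lam1 ≤ lam k) (f : lp (fun _ : ℕ => ℝ) 2)
    (S : ℝ → lp (fun _ : ℕ => ℝ) 2)
    (hS : ∀ s ∈ Set.Ioo (0 : ℝ) 1, ∀ k, S s k = lam k ^ (-s) * f k)
    (u1 : ℝ → lp (fun _ : ℕ => ℝ) 2)
    (hu1 : ∀ s ∈ Set.Ioo (0 : ℝ) 1, ∀ k,
      u1 s k = -(Real.log (lam k)) * lam k ^ (-s) * f k)
    (ud : lp (fun _ : ℕ => ℝ) 2) (a b : ℝ) (ha : 0 ≤ a) (hab : a < b) (hb : b ≤ 1)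
    (φ φ' : ℝ → ℝ) (hφ0 : ∀ s ∈ Set.Ioo a b, 0 ≤ φ s)
    (hφconv : ConvexOn ℝ (Set.Ioo a b) φ)
    (hφd : ∀ s ∈ Set.Ioo a b, HasDerivAt φ (φ' s) s)
    (hφa : Tendsto φ (nhdsWithin a (Set.Ioi a)) atTop)
    (hφb : Tendsto φ (nhdsWithin b (Set.Iio b)) atTop)
    (F : ℝ → ℝ) (hF : ∀ s ∈ Set.Ioo a b, F s = 1 / 2 * ‖S s - ud‖ ^ 2 + φ s)
    (sbar : ℝ) (hsbar : sbar ∈ Set.Ioo a b)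
    (hmin : ∀ s ∈ Set.Ioo a b, F sbar ≤ F s) :
    ⟪S sbar - ud, u1 sbar⟫ + φ' sbar = 0 :=
  first_order_optimality_general lam1 hlam1 lam hlam f S hS u1 hu1 ud a b ha hb φ φ' hφd F hF sbar
    hsbar hmin
end

section
/- Assume 0 < a and that φ is strongly convex with parameter ξ > 0, i.e. (φ'(s₁) − φ'(s₂))·(s₁ − s₂) ≥ ξ|s₁ − s₂|² for all s₁, s₂ ∈ (a,b). Then F is twice differentiable on (a,b), its second derivative equals F''(s) = ‖u^{(1)}(s)‖² + ⟨S(s) − u_d, u^{(2)}(s)⟩ + φ''(s), and there exists a constant C > 0 depending only on λ₁ and a such that F''(s) ≥ ξ − C·(‖f‖ + ‖u_d‖)·‖f‖ for every s ∈ (a,b). In particular, if (‖f‖ + ‖u_d‖)·‖f‖ < ξ/C, then there exists ϑ > 0 with F''(s) ≥ ϑ for every s ∈ (a,b). -/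
open Real Filter
open scoped RealInnerProductSpace

open Topology Asymptotics Set
open scoped ENNReal

/-!
With `x = log λ_k ≥ log λ₁`, the `k`-th coordinate of `S`, `u¹`, `u²` is `(-x)^m e^{-s x} f_k`,
and `|x|^n e^{-r x}` is bounded uniformly in `x ≥ log λ₁` and in `r` ranging over a compact
subinterval of `(0, ∞)`. Together with `|e^u - 1 - u| ≤ u² e^{|u|}` this bounds the Taylor
remainder of each coordinate by `C (t - s)² |f_k|`, which gives differentiability in `ℓ²`;
the same bound gives `‖S(s)‖, ‖u²(s)‖ ≤ C ‖f‖` on `(a, b) ⊆ [a, 1]`. Strong convexity forces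
`φ'' ≥ ξ`, and Cauchy–Schwarz bounds `⟨S(s) − u_d, u²(s)⟩` below by `-C² (‖f‖ + ‖u_d‖) ‖f‖`.
-/

theorem Real.abs_exp_sub_one_sub_le_sq_mul_exp_abs (u : ℝ) : |exp u - 1 - u| ≤ u ^ 2 * exp |u| := by
  have h := Complex.norm_exp_sub_sum_le_norm_mul_exp (u : ℂ) 2
  simp only [Finset.sum_range_succ, Finset.sum_range_zero] at h
  rw [sub_sub, ← Real.norm_eq_abs, ← Complex.norm_real]
  push_cast
  simpa using h

-- The factor `e^{|u|}` of the exponential remainder is absorbed into `y^(-r)`, `r = s ± |t - s|`.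
theorem exists_abs_rpow_neg_sub_sub_le {y : ℝ} (hy : 0 < y) (s t : ℝ) :
    ∃ r, |r - s| ≤ |t - s| ∧
      |y ^ (-t) - y ^ (-s) - (t - s) * (-log y * y ^ (-s))| ≤
        (t - s) ^ 2 * (|log y| ^ 2 * y ^ (-r)) := by
  simp only [rpow_def_of_pos hy]
  set x := log y
  obtain ⟨r, hr, hexp⟩ : ∃ r, |r - s| ≤ |t - s| ∧
      exp (x * -s) * exp |(t - s) * x| = exp (x * -r) := by
    simp only [← exp_add, abs_mul]
    rcases abs_cases x with ⟨hx, -⟩ | ⟨hx, -⟩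
    · exact ⟨s - |t - s|, by simp, by rw [hx]; ring_nf⟩
    · exact ⟨s + |t - s|, by simp, by rw [hx]; ring_nf⟩
  refine ⟨r, hr, ?_⟩
  have hsplit : exp (x * -t) - exp (x * -s) - (t - s) * (-x * exp (x * -s)) =
      exp (x * -s) * (exp (-((t - s) * x)) - 1 - -((t - s) * x)) := by
    rw [mul_sub, mul_sub, ← exp_add]; ring_nf
  rw [hsplit, abs_mul, abs_exp]
  calc exp (x * -s) * |exp (-((t - s) * x)) - 1 - -((t - s) * x)|
      ≤ exp (x * -s) * (((t - s) * x) ^ 2 * exp |(t - s) * x|) := by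
        gcongr
        simpa using abs_exp_sub_one_sub_le_sq_mul_exp_abs (-((t - s) * x))
    _ = (t - s) ^ 2 * (|x| ^ 2 * (exp (x * -s) * exp |(t - s) * x|)) := by rw [sq_abs]; ring
    _ = (t - s) ^ 2 * (|x| ^ 2 * exp (x * -r)) := by rw [hexp]

theorem exists_abs_log_pow_mul_rpow_neg_le {lam1 : ℝ} (hlam1 : 0 < lam1) (n : ℕ) {c d : ℝ}
    (hc : 0 < c) : ∃ B, 0 ≤ B ∧ ∀ y, lam1 ≤ y → ∀ r ∈ Icc c d, |log y| ^ n * y ^ (-r) ≤ B := by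
  refine ⟨n.factorial / c ^ n + |log lam1| ^ n * exp (d * |log lam1|), by positivity, ?_⟩
  rintro y hy r ⟨hcr, hrd⟩
  have hy0 : 0 < y := hlam1.trans_le hy
  rw [rpow_def_of_pos hy0]
  set x := log y
  rcases le_or_gt 0 x with hx | hx
  · have hfac : x ^ n * c ^ n ≤ n.factorial * exp (c * x) := by
      have := pow_div_factorial_le_exp _ (mul_nonneg hc.le hx) n
      rw [div_le_iff₀ (by positivity), mul_pow] at this
      linarith
    calc |x| ^ n * exp (x * -r) ≤ x ^ n * exp (-(c * x)) := by
          rw [abs_of_nonneg hx]; gcongr; nlinarith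
      _ ≤ n.factorial / c ^ n := by
          rw [le_div_iff₀ (by positivity), exp_neg, mul_right_comm, ← div_eq_mul_inv,
            div_le_iff₀ (exp_pos _)]
          exact hfac
      _ ≤ _ := le_add_of_nonneg_right (by positivity)
  · have hL : log lam1 ≤ x := log_le_log hlam1 hy
    have hxL : |x| ≤ |log lam1| := by
      rw [abs_of_neg hx, abs_of_neg (hL.trans_lt hx)]; linarith
    calc |x| ^ n * exp (x * -r) ≤ |log lam1| ^ n * exp (d * |log lam1|) := by
          gcongr ?_ ^ n * exp ?_
          rw [abs_of_neg hx] at hxL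
          nlinarith
      _ ≤ _ := le_add_of_nonneg_left (by positivity)

theorem lp.norm_le_mul_norm_of_abs_le {ι : Type*} {p : ℝ≥0∞} [Fact (1 ≤ p)]
    {v g : lp (fun _ : ι => ℝ) p} {C : ℝ} (hC : 0 ≤ C) (h : ∀ i, |v i| ≤ C * |g i|) :
    ‖v‖ ≤ C * ‖g‖ := by
  calc ‖v‖ ≤ ‖C • g‖ := lp.norm_mono (one_pos.trans_le Fact.out).ne' fun i => by
        simpa [abs_mul, abs_of_nonneg hC] using h i
    _ = C * ‖g‖ := by rw [norm_smul, norm_of_nonneg hC]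

theorem hasDerivAt_of_norm_sub_sub_smul_le_sq {E : Type*} [NormedAddCommGroup E]
    [NormedSpace ℝ E] {V : ℝ → E} {W : E} {s C : ℝ}
    (h : ∀ᶠ t in 𝓝 s, ‖V t - V s - (t - s) • W‖ ≤ C * (t - s) ^ 2) : HasDerivAt V W s := by
  rw [hasDerivAt_iff_isLittleO]
  refine (IsBigO.of_bound C ?_).trans_isLittleO (isLittleO_pow_sub_sub s one_lt_two)
  filter_upwards [h] with t ht
  simpa using ht

theorem le_of_hasDerivAt_of_sq_le_mul_sub {g : ℝ → ℝ} {g' ξ s : ℝ} (hg : HasDerivAt g g' s)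
    (h : ∀ᶠ t in 𝓝 s, ξ * (t - s) ^ 2 ≤ (g t - g s) * (t - s)) : ξ ≤ g' := by
  refine ge_of_tendsto (hasDerivAt_iff_tendsto_slope.1 hg) ?_
  filter_upwards [nhdsWithin_le_nhds h, self_mem_nhdsWithin] with t ht hts
  have hts : t - s ≠ 0 := sub_ne_zero.2 hts
  rw [slope_def_field, ← mul_div_mul_right _ _ hts, ← sq, le_div_iff₀ (by positivity)]
  exact ht

section LogPowRpowSequences

variable {ι : Type*} {p : ℝ≥0∞} [Fact (1 ≤ p)] {lam : ι → ℝ} {lam1 : ℝ}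

theorem exists_norm_le_of_coord_eq_log_pow_mul_rpow (hlam1 : 0 < lam1) (hlam : ∀ i, lam1 ≤ lam i)
    (g : lp (fun _ : ι => ℝ) p) (n : ℕ) {c d : ℝ} (hc : 0 < c) :
    ∃ B, ∀ r ∈ Icc c d, ∀ v : lp (fun _ : ι => ℝ) p,
      (∀ i, v i = (-log (lam i)) ^ n * lam i ^ (-r) * g i) → ‖v‖ ≤ B * ‖g‖ := by
  obtain ⟨B, hB0, hB⟩ := exists_abs_log_pow_mul_rpow_neg_le hlam1 n (d := d) hc
  refine ⟨B, fun r hr v hv => lp.norm_le_mul_norm_of_abs_le hB0 fun i => ?_⟩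
  have hlam0 : 0 < lam i := hlam1.trans_le (hlam i)
  rw [hv, abs_mul, abs_mul, abs_pow, abs_neg, abs_of_pos (rpow_pos_of_pos hlam0 _)]
  gcongr
  exact hB _ (hlam i) r hr

theorem hasDerivAt_of_coord_eq_log_pow_mul_rpow (hlam1 : 0 < lam1) (hlam : ∀ i, lam1 ≤ lam i)
    (g : lp (fun _ : ι => ℝ) p) (m : ℕ) {V : ℝ → lp (fun _ : ι => ℝ) p}
    {W : lp (fun _ : ι => ℝ) p} {s : ℝ} (hs : 0 < s)
    (hV : ∀ᶠ t in 𝓝 s, ∀ i, V t i = (-log (lam i)) ^ m * lam i ^ (-t) * g i)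
    (hW : ∀ i, W i = (-log (lam i)) ^ (m + 1) * lam i ^ (-s) * g i) :
    HasDerivAt V W s := by
  obtain ⟨B, hB0, hB⟩ := exists_abs_log_pow_mul_rpow_neg_le hlam1 (m + 2) (c := s / 2)
    (d := 3 * s / 2) (half_pos hs)
  refine hasDerivAt_of_norm_sub_sub_smul_le_sq (C := B * ‖g‖) ?_
  filter_upwards [hV, Metric.closedBall_mem_nhds s (half_pos hs)] with t hVt ht
  refine (lp.norm_le_mul_norm_of_abs_le (C := B * (t - s) ^ 2) (by positivity)
    fun i => ?_).trans_eq (by ring)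
  have hlam0 : 0 < lam i := hlam1.trans_le (hlam i)
  obtain ⟨r, hr, hTaylor⟩ := exists_abs_rpow_neg_sub_sub_le hlam0 s t
  have hrI : r ∈ Icc (s / 2) (3 * s / 2) := by
    rw [Metric.mem_closedBall, Real.dist_eq] at ht
    constructor <;> linarith [abs_le.1 (hr.trans ht)]
  simp only [lp.coeFn_sub, lp.coeFn_smul, Pi.sub_apply, Pi.smul_apply, smul_eq_mul, hVt,
    hV.self_of_nhds, hW]
  calc |(-log (lam i)) ^ m * lam i ^ (-t) * g i - (-log (lam i)) ^ m * lam i ^ (-s) * g i -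
        (t - s) * ((-log (lam i)) ^ (m + 1) * lam i ^ (-s) * g i)|
      = |log (lam i)| ^ m * |g i| *
          |lam i ^ (-t) - lam i ^ (-s) - (t - s) * (-log (lam i) * lam i ^ (-s))| := by
        rw [← abs_neg (log _), ← abs_pow, ← abs_mul, ← abs_mul]; congr 1; ring
    _ ≤ |log (lam i)| ^ m * |g i| * ((t - s) ^ 2 * (|log (lam i)| ^ 2 * lam i ^ (-r))) := by
        gcongr
    _ = (t - s) ^ 2 * (|log (lam i)| ^ (m + 2) * lam i ^ (-r)) * |g i| := by ring
    _ ≤ (t - s) ^ 2 * B * |g i| := by gcongr; exact hB _ (hlam i) r hrI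
    _ = B * (t - s) ^ 2 * |g i| := by ring

end LogPowRpowSequences

theorem neg_le_inner_sub_of_norm_le {E : Type*} [NormedAddCommGroup E] [InnerProductSpace ℝ E]
    {v w u : E} {A C : ℝ} (hC : 1 ≤ C) (hv : ‖v‖ ≤ C * A) (hw : ‖w‖ ≤ C * A) :
    -(C ^ 2 * (A + ‖u‖) * A) ≤ ⟪v - u, w⟫ := by
  have hA : 0 ≤ A := nonneg_of_mul_nonneg_right ((norm_nonneg w).trans hw) (by linarith)
  have hvu : ‖v - u‖ ≤ C * (A + ‖u‖) := by nlinarith [norm_sub_le v u, norm_nonneg u]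
  calc -(C ^ 2 * (A + ‖u‖) * A) = -(C * (A + ‖u‖) * (C * A)) := by ring
    _ ≤ -(‖v - u‖ * ‖w‖) := by gcongr
    _ ≤ ⟪v - u, w⟫ := (abs_le.1 (abs_real_inner_le_norm _ _)).1

theorem second_derivative_reduced_cost_bound_general (lam1 : ℝ) (hlam1 : 0 < lam1) (lam : ℕ → ℝ)
    (hlam : ∀ k, lam1 ≤ lam k) (f : lp (fun _ : ℕ => ℝ) 2)
    (S : ℝ → lp (fun _ : ℕ => ℝ) 2)
    (hS : ∀ s ∈ Set.Ioo (0 : ℝ) 1, ∀ k, S s k = lam k ^ (-s) * f k)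
    (u1 u2 : ℝ → lp (fun _ : ℕ => ℝ) 2)
    (hu1 : ∀ s ∈ Set.Ioo (0 : ℝ) 1, ∀ k,
      u1 s k = -(Real.log (lam k)) * lam k ^ (-s) * f k)
    (hu2 : ∀ s ∈ Set.Ioo (0 : ℝ) 1, ∀ k,
      u2 s k = (Real.log (lam k)) ^ 2 * lam k ^ (-s) * f k)
    (ud : lp (fun _ : ℕ => ℝ) 2) (a b : ℝ) (ha : 0 < a) (hb : b ≤ 1)
    (φ φ' φ'' : ℝ → ℝ)
    (hφd : ∀ s ∈ Set.Ioo a b, HasDerivAt φ (φ' s) s)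
    (hφdd : ∀ s ∈ Set.Ioo a b, HasDerivAt φ' (φ'' s) s)
    (ξ : ℝ)
    (hstrong : ∀ s1 ∈ Set.Ioo a b, ∀ s2 ∈ Set.Ioo a b,
      ξ * |s1 - s2| ^ 2 ≤ (φ' s1 - φ' s2) * (s1 - s2))
    (F : ℝ → ℝ) (hF : ∀ s ∈ Set.Ioo a b, F s = 1 / 2 * ‖S s - ud‖ ^ 2 + φ s) :
    (∀ s ∈ Set.Ioo a b,
        HasDerivAt F (⟪S s - ud, u1 s⟫ + φ' s) s ∧
        HasDerivAt (fun t => ⟪S t - ud, u1 t⟫ + φ' t)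
          (‖u1 s‖ ^ 2 + ⟪S s - ud, u2 s⟫ + φ'' s) s) ∧
    ∃ C : ℝ, 0 < C ∧
      (∀ s ∈ Set.Ioo a b,
        ξ - C * (‖f‖ + ‖ud‖) * ‖f‖ ≤ ‖u1 s‖ ^ 2 + ⟪S s - ud, u2 s⟫ + φ'' s) ∧
      ((‖f‖ + ‖ud‖) * ‖f‖ < ξ / C →
        ∃ ϑ : ℝ, 0 < ϑ ∧ ∀ s ∈ Set.Ioo a b,
          ϑ ≤ ‖u1 s‖ ^ 2 + ⟪S s - ud, u2 s⟫ + φ'' s) := by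
  have hsub : Ioo a b ⊆ Ioo 0 1 := Ioo_subset_Ioo ha.le hb
  have hS' : ∀ t ∈ Ioo (0 : ℝ) 1, ∀ k, S t k = (-log (lam k)) ^ 0 * lam k ^ (-t) * f k :=
    fun t ht k => by rw [hS t ht k]; ring
  have hu1' : ∀ t ∈ Ioo (0 : ℝ) 1, ∀ k, u1 t k = (-log (lam k)) ^ 1 * lam k ^ (-t) * f k :=
    fun t ht k => by rw [hu1 t ht k]; ring
  have hu2' : ∀ t ∈ Ioo (0 : ℝ) 1, ∀ k, u2 t k = (-log (lam k)) ^ 2 * lam k ^ (-t) * f k :=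
    fun t ht k => by rw [hu2 t ht k]; ring
  have hderiv (s : ℝ) (hs : s ∈ Ioo a b) : HasDerivAt S (u1 s) s ∧ HasDerivAt u1 (u2 s) s := by
    have hnhds : ∀ᶠ t in 𝓝 s, t ∈ Ioo (0 : ℝ) 1 := Ioo_mem_nhds (hsub hs).1 (hsub hs).2
    exact ⟨hasDerivAt_of_coord_eq_log_pow_mul_rpow hlam1 hlam f 0 (hsub hs).1
        (hnhds.mono hS') (hu1' s (hsub hs)),
      hasDerivAt_of_coord_eq_log_pow_mul_rpow hlam1 hlam f 1 (hsub hs).1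
        (hnhds.mono hu1') (hu2' s (hsub hs))⟩
  have hφ'' (s : ℝ) (hs : s ∈ Ioo a b) : ξ ≤ φ'' s :=
    le_of_hasDerivAt_of_sq_le_mul_sub (hφdd s hs) <| eventually_of_mem (Ioo_mem_nhds hs.1 hs.2)
      fun t ht => by simpa only [sq_abs] using hstrong t ht s hs
  obtain ⟨B₀, hSB⟩ := exists_norm_le_of_coord_eq_log_pow_mul_rpow hlam1 hlam f 0 (d := 1) ha
  obtain ⟨B₂, hu2B⟩ := exists_norm_le_of_coord_eq_log_pow_mul_rpow hlam1 hlam f 2 (d := 1) ha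
  set C := max (max B₀ B₂) 1
  have hbound (s : ℝ) (hs : s ∈ Ioo a b) :
      ξ - C ^ 2 * (‖f‖ + ‖ud‖) * ‖f‖ ≤ ‖u1 s‖ ^ 2 + ⟪S s - ud, u2 s⟫ + φ'' s := by
    have hr : s ∈ Icc a 1 := ⟨hs.1.le, hs.2.le.trans hb⟩
    have hSs : ‖S s‖ ≤ C * ‖f‖ := (hSB s hr _ (hS' s (hsub hs))).trans <| by
      gcongr; exact le_max_of_le_left (le_max_left _ _)
    have hu2s : ‖u2 s‖ ≤ C * ‖f‖ := (hu2B s hr _ (hu2' s (hsub hs))).trans <| by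
      gcongr; exact le_max_of_le_left (le_max_right _ _)
    linarith [neg_le_inner_sub_of_norm_le (u := ud) (le_max_right _ _) hSs hu2s, hφ'' s hs,
      sq_nonneg ‖u1 s‖]
  refine ⟨fun s hs => ⟨?_, ?_⟩, C ^ 2, by positivity, hbound, fun hsmall => ⟨_, ?_, hbound⟩⟩
  · have hG := (((hderiv s hs).1.sub_const ud).norm_sq.const_mul (1 / 2)).add (hφd s hs)
    refine (hG.congr_of_eventuallyEq ?_).congr_deriv (by ring)
    exact eventually_of_mem (Ioo_mem_nhds hs.1 hs.2) hF
  · have hG := (((hderiv s hs).1.sub_const ud).inner ℝ (hderiv s hs).2).add (hφdd s hs)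
    refine hG.congr_deriv ?_
    rw [real_inner_self_eq_norm_sq]; ring
  · rw [lt_div_iff₀ (by positivity)] at hsmall
    linarith

/-- Under strong convexity of `φ` (with parameter `ξ > 0`) and `0 < a`, the reduced cost
functional `F` is twice differentiable on `(a,b)`, its second derivative equals
`F''(s) = ‖u¹(s)‖² + ⟨S(s) − u_d, u²(s)⟩ + φ''(s)`, and there is `C > 0`, depending only on
`λ₁` and `a`, with `F''(s) ≥ ξ − C(‖f‖ + ‖u_d‖)‖f‖` on `(a,b)`.  In particular, if
`(‖f‖ + ‖u_d‖)‖f‖ < ξ/C` then `F'' ≥ ϑ` on `(a,b)` for some `ϑ > 0`. -/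
theorem second_derivative_reduced_cost_bound (lam1 : ℝ) (hlam1 : 0 < lam1) (lam : ℕ → ℝ)
    (hlam : ∀ k, lam1 ≤ lam k) (f : lp (fun _ : ℕ => ℝ) 2)
    (S : ℝ → lp (fun _ : ℕ => ℝ) 2)
    (hS : ∀ s ∈ Set.Ioo (0 : ℝ) 1, ∀ k, S s k = lam k ^ (-s) * f k)
    (u1 u2 : ℝ → lp (fun _ : ℕ => ℝ) 2)
    (hu1 : ∀ s ∈ Set.Ioo (0 : ℝ) 1, ∀ k,
      u1 s k = -(Real.log (lam k)) * lam k ^ (-s) * f k)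
    (hu2 : ∀ s ∈ Set.Ioo (0 : ℝ) 1, ∀ k,
      u2 s k = (Real.log (lam k)) ^ 2 * lam k ^ (-s) * f k)
    (ud : lp (fun _ : ℕ => ℝ) 2) (a b : ℝ) (ha : 0 < a) (hab : a < b) (hb : b ≤ 1)
    (φ φ' φ'' : ℝ → ℝ) (hφ0 : ∀ s ∈ Set.Ioo a b, 0 ≤ φ s)
    (hφconv : ConvexOn ℝ (Set.Ioo a b) φ)
    (hφd : ∀ s ∈ Set.Ioo a b, HasDerivAt φ (φ' s) s)
    (hφdd : ∀ s ∈ Set.Ioo a b, HasDerivAt φ' (φ'' s) s)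
    (hφa : Tendsto φ (nhdsWithin a (Set.Ioi a)) atTop)
    (hφb : Tendsto φ (nhdsWithin b (Set.Iio b)) atTop)
    (ξ : ℝ) (hξ : 0 < ξ)
    (hstrong : ∀ s1 ∈ Set.Ioo a b, ∀ s2 ∈ Set.Ioo a b,
      ξ * |s1 - s2| ^ 2 ≤ (φ' s1 - φ' s2) * (s1 - s2))
    (F : ℝ → ℝ) (hF : ∀ s ∈ Set.Ioo a b, F s = 1 / 2 * ‖S s - ud‖ ^ 2 + φ s) :
    (∀ s ∈ Set.Ioo a b,
        HasDerivAt F (⟪S s - ud, u1 s⟫ + φ' s) s ∧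
        HasDerivAt (fun t => ⟪S t - ud, u1 t⟫ + φ' t)
          (‖u1 s‖ ^ 2 + ⟪S s - ud, u2 s⟫ + φ'' s) s) ∧
    ∃ C : ℝ, 0 < C ∧
      (∀ s ∈ Set.Ioo a b,
        ξ - C * (‖f‖ + ‖ud‖) * ‖f‖ ≤ ‖u1 s‖ ^ 2 + ⟪S s - ud, u2 s⟫ + φ'' s) ∧
      ((‖f‖ + ‖ud‖) * ‖f‖ < ξ / C →
        ∃ ϑ : ℝ, 0 < ϑ ∧ ∀ s ∈ Set.Ioo a b,
          ϑ ≤ ‖u1 s‖ ^ 2 + ⟪S s - ud, u2 s⟫ + φ'' s) :=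
  second_derivative_reduced_cost_bound_general lam1 hlam1 lam hlam f S hS u1 u2 hu1 hu2 ud a b ha hb
    φ φ' φ'' hφd hφdd ξ hstrong F hF
end

section
/- Assume 0 < a < b < 1. There exists a constant C > 0, depending only on λ₁, ‖f‖ and ‖u_d‖, such that for every σ > 0 and every s ∈ (a,b) with s ± σ ∈ (a,b), one has |F'(s) − j_σ(s)| ≤ C · σ² · a^{-3}, where F'(s) = ⟨S(s) − u_d, u^{(1)}(s)⟩ + φ'(s) is the derivative of the reduced cost functional. In particular, j_σ converges uniformly to F' as σ → 0. -/
open Real Filter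
open scoped RealInnerProductSpace

/-!
Coordinatewise, with `x = log λ_k`, the error `u⁽¹⁾(s) − d_σ u(s)` equals
`λ_k^{-s} (sinh (σx) − σx) / σ · f_k`, and `|sinh t − t| ≤ |t|³ e^{|t|} / 6`.
The factor `|x|³ e^{-sx + σ|x|}` is at most `6 / a³` when `x ≥ 0` (because `s − σ ≥ a` and
`y³ ≤ 6 eʸ`) and at most `|log λ₁|³ / λ₁` when `x < 0` (because `s + σ ≤ 1` and `λ_k ≥ λ₁`).
Hence `‖u⁽¹⁾(s) − d_σ u(s)‖ = O(σ² a⁻³ ‖f‖)`, and Cauchy–Schwarz with `‖S(s)‖ ≤ max 1 λ₁⁻¹ ‖f‖`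
concludes.
-/

lemma cosh_sub_one_le_sq_mul_exp {t : ℝ} (ht : 0 ≤ t) : cosh t - 1 ≤ t ^ 2 / 2 * exp t := by
  have hprod : exp t * exp (-t) = 1 := by rw [← exp_add, add_neg_cancel, exp_zero]
  have hneg : 1 - t ≤ exp (-t) := by linarith [add_one_le_exp (-t)]
  have hpos : 1 + t ≤ exp t := by linarith [add_one_le_exp t]
  rw [cosh_eq]
  nlinarith [sq_nonneg (exp t - 1), mul_nonneg ht (exp_pos t).le,
    mul_le_mul_of_nonneg_left hneg (exp_pos t).le]

lemma sinh_sub_self_le_cube_mul_exp {t : ℝ} (ht : 0 ≤ t) :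
    sinh t - t ≤ t ^ 3 / 6 * exp t := by
  have hf : ∀ x, HasDerivAt (fun x => sinh x - x) (cosh x - 1) x := fun x =>
    (hasDerivAt_sinh x).sub (hasDerivAt_id x)
  have hB : ∀ x, HasDerivAt (fun x => x ^ 3 / 6 * exp x) ((x ^ 2 / 2 + x ^ 3 / 6) * exp x) x :=
    fun x => (((hasDerivAt_pow 3 x).div_const 6).fun_mul (hasDerivAt_exp x)).congr_deriv
      (by norm_num; ring)
  refine image_le_of_deriv_right_le_deriv_boundary (by fun_prop)
    (fun x _ => (hf x).hasDerivWithinAt) (by simp) (by fun_prop)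
    (fun x _ => (hB x).hasDerivWithinAt) (fun x hx => ?_) ⟨ht, le_rfl⟩
  have hx₀ : 0 ≤ x := hx.1
  have hcube : 0 ≤ x ^ 3 / 6 * exp x := by positivity
  linarith [cosh_sub_one_le_sq_mul_exp hx₀]

lemma abs_sinh_sub_self_le (t : ℝ) : |sinh t - t| ≤ |t| ^ 3 / 6 * exp |t| := by
  rcases le_or_gt 0 t with ht | ht
  · rw [abs_of_nonneg (sub_nonneg.2 (self_le_sinh_iff.2 ht)), abs_of_nonneg ht]
    exact sinh_sub_self_le_cube_mul_exp ht
  · have h := sinh_sub_self_le_cube_mul_exp (neg_nonneg.2 ht.le)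
    rw [sinh_neg] at h
    rw [abs_of_nonpos (sub_nonpos.2 (sinh_le_self_iff.2 ht.le)), abs_of_neg ht]
    linarith

lemma pow_three_mul_exp_neg_mul_le {a x : ℝ} (ha : 0 < a) (hx : 0 ≤ x) :
    x ^ 3 * exp (-(a * x)) ≤ 6 / a ^ 3 := by
  have h := Real.pow_div_factorial_le_exp (a * x) (mul_nonneg ha.le hx) 3
  rw [le_div_iff₀ (by positivity), exp_neg]
  calc x ^ 3 * (exp (a * x))⁻¹ * a ^ 3
        = (a * x) ^ 3 / (Nat.factorial 3 : ℕ) / exp (a * x) * 6 := by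
          norm_num [Nat.factorial]; ring
    _ ≤ 1 * 6 := by gcongr; exact div_le_one_of_le₀ h (exp_pos _).le
    _ = 6 := one_mul 6

lemma abs_centered_diff_rpow_neg_sub_deriv_le {l : ℝ} (hl : 0 < l) (s : ℝ) {σ : ℝ}
    (hσ : 0 < σ) :
    |-log l * l ^ (-s) - (2 * σ)⁻¹ * (l ^ (-(s + σ)) - l ^ (-(s - σ)))| ≤
      σ ^ 2 / 6 * (|log l| ^ 3 * exp (-s * log l + σ * |log l|)) := by
  set x := log l
  have hid : -x * l ^ (-s) - (2 * σ)⁻¹ * (l ^ (-(s + σ)) - l ^ (-(s - σ))) =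
      exp (-s * x) * ((sinh (σ * x) - σ * x) / σ) := by
    simp only [rpow_def_of_pos hl, sinh_eq]
    rw [show x * -(s + σ) = -s * x + -(σ * x) by ring, show x * -(s - σ) = -s * x + σ * x by ring,
      show x * -s = -s * x by ring, exp_add, exp_add]
    field_simp
    ring
  have hsinh := abs_sinh_sub_self_le (σ * x)
  rw [abs_mul, abs_of_pos hσ, mul_pow] at hsinh
  rw [hid, abs_mul, abs_div, abs_of_pos hσ, abs_exp, exp_add]
  calc exp (-s * x) * (|sinh (σ * x) - σ * x| / σ)
      ≤ exp (-s * x) * (σ ^ 3 * |x| ^ 3 / 6 * exp (σ * |x|) / σ) := by gcongr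
    _ = σ ^ 2 / 6 * (|x| ^ 3 * (exp (-s * x) * exp (σ * |x|))) := by field_simp

lemma abs_log_pow_three_mul_exp_le {l₁ l a s σ : ℝ} (hl₁ : 0 < l₁) (hl : l₁ ≤ l) (ha : 0 < a)
    (hσ : 0 ≤ σ) (hlow : a ≤ s - σ) (hup : s + σ ≤ 1) :
    |log l| ^ 3 * exp (-s * log l + σ * |log l|) ≤ (6 + |log l₁| ^ 3 / l₁) / a ^ 3 := by
  have hl0 : 0 < l := hl₁.trans_le hl
  have hK : 0 ≤ |log l₁| ^ 3 / l₁ := by positivity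
  set x := log l
  rcases le_or_gt 0 x with hx | hx
  · calc |x| ^ 3 * exp (-s * x + σ * |x|) ≤ x ^ 3 * exp (-(a * x)) := by
          rw [abs_of_nonneg hx]; gcongr; nlinarith
      _ ≤ 6 / a ^ 3 := pow_three_mul_exp_neg_mul_le ha hx
      _ ≤ (6 + |log l₁| ^ 3 / l₁) / a ^ 3 := by gcongr; linarith
  · have hlog : log l₁ ≤ x := log_le_log hl₁ hl
    have hexp : exp (-s * x + σ * |x|) ≤ l₁⁻¹ :=
      calc exp (-s * x + σ * |x|) ≤ exp (-x) := by rw [abs_of_neg hx]; gcongr; nlinarith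
        _ = l⁻¹ := by rw [exp_neg, exp_log hl0]
        _ ≤ l₁⁻¹ := inv_anti₀ hl₁ hl
    have ha3 : a ^ 3 ≤ 1 := pow_le_one₀ ha.le (by linarith)
    have habs : |x| ≤ |log l₁| := by
      rw [abs_of_neg hx, abs_of_neg (hlog.trans_lt hx)]
      linarith
    calc |x| ^ 3 * exp (-s * x + σ * |x|) ≤ |log l₁| ^ 3 * l₁⁻¹ :=
          mul_le_mul (pow_le_pow_left₀ (abs_nonneg _) habs 3) hexp (exp_pos _).le (by positivity)
      _ ≤ |log l₁| ^ 3 / l₁ / a ^ 3 := by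
          rw [← div_eq_mul_inv]; exact le_div_self hK (by positivity) ha3
      _ ≤ (6 + |log l₁| ^ 3 / l₁) / a ^ 3 := by gcongr; linarith

lemma abs_centered_diff_rpow_neg_sub_deriv_le_div_cube {l₁ l a s σ : ℝ} (hl₁ : 0 < l₁)
    (hl : l₁ ≤ l) (ha : 0 < a) (hσ : 0 < σ) (hlow : a ≤ s - σ) (hup : s + σ ≤ 1) :
    |-log l * l ^ (-s) - (2 * σ)⁻¹ * (l ^ (-(s + σ)) - l ^ (-(s - σ)))| ≤
      σ ^ 2 / 6 * ((6 + |log l₁| ^ 3 / l₁) / a ^ 3) :=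
  (abs_centered_diff_rpow_neg_sub_deriv_le (hl₁.trans_le hl) s hσ).trans <| by
    gcongr; exact abs_log_pow_three_mul_exp_le hl₁ hl ha hσ.le hlow hup

lemma rpow_neg_le_max_one_inv {l₁ l s : ℝ} (hl₁ : 0 < l₁) (hl : l₁ ≤ l) (hs₀ : 0 ≤ s)
    (hs₁ : s ≤ 1) : l ^ (-s) ≤ max 1 l₁⁻¹ :=
  calc l ^ (-s) ≤ l₁ ^ (-s) := rpow_le_rpow_of_nonpos hl₁ hl (by linarith)
    _ = l₁⁻¹ ^ s := by rw [rpow_neg hl₁.le, inv_rpow hl₁.le]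
    _ ≤ max 1 l₁⁻¹ ^ s := by gcongr; exact le_max_right _ _
    _ ≤ max 1 l₁⁻¹ := rpow_le_self_of_one_le (le_max_left _ _) hs₁

lemma lp.norm_le_mul_of_forall_abs_le {α : Type*} {p : ENNReal} (hp : p ≠ 0)
    {x y : lp (fun _ : α => ℝ) p} {c : ℝ} (hc : 0 ≤ c) (h : ∀ i, |x i| ≤ c * |y i|) :
    ‖x‖ ≤ c * ‖y‖ := by
  have hxy : ‖x‖ ≤ ‖c • y‖ := lp.norm_mono hp fun i => by
    simpa [Real.norm_eq_abs, abs_mul, abs_of_nonneg hc] using h i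
  simpa [Real.norm_eq_abs, abs_of_nonneg hc] using hxy.trans (lp.norm_const_smul_le hp c y)

theorem jsigma_uniform_convergence_general (lam1 : ℝ) (hlam1 : 0 < lam1) (lam : ℕ → ℝ)
    (hlam : ∀ k, lam1 ≤ lam k) (f : lp (fun _ : ℕ => ℝ) 2)
    (S u1 : ℝ → lp (fun _ : ℕ => ℝ) 2)
    (hS : ∀ s ∈ Set.Ioo (0 : ℝ) 1, ∀ k, S s k = lam k ^ (-s) * f k)
    (hu1 : ∀ s ∈ Set.Ioo (0 : ℝ) 1, ∀ k,
      u1 s k = -(Real.log (lam k)) * lam k ^ (-s) * f k)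
    (ud : lp (fun _ : ℕ => ℝ) 2)
    (a b : ℝ) (ha : 0 < a) (hb : b < 1)
    (φ' : ℝ → ℝ) :
    ∃ C : ℝ, 0 < C ∧
      ∀ σ : ℝ, 0 < σ → ∀ s ∈ Set.Ioo a b,
        s + σ ∈ Set.Ioo a b → s - σ ∈ Set.Ioo a b →
        |(⟪S s - ud, u1 s⟫ + φ' s) -
            (⟪S s - ud, (2 * σ)⁻¹ • (S (s + σ) - S (s - σ))⟫ + φ' s)| ≤
          C * σ ^ 2 / a ^ 3 := by
  set K := |log lam1| ^ 3 / lam1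
  set M := max 1 lam1⁻¹
  refine ⟨(M * ‖f‖ + ‖ud‖) * ((6 + K) / 6) * ‖f‖ + 1, by positivity, ?_⟩
  rintro σ hσ s ⟨has, hsb⟩ ⟨-, hspb⟩ ⟨hsma, -⟩
  have hunit : ∀ t, a < t → t < b → t ∈ Set.Ioo (0 : ℝ) 1 := fun t h₀ h₁ =>
    ⟨ha.trans h₀, h₁.trans hb⟩
  set w := u1 s - (2 * σ)⁻¹ • (S (s + σ) - S (s - σ))
  have hw : ‖w‖ ≤ σ ^ 2 / 6 * ((6 + K) / a ^ 3) * ‖f‖ := by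
    refine lp.norm_le_mul_of_forall_abs_le two_ne_zero (by positivity) fun k => ?_
    have hwk : w k = (-log (lam k) * lam k ^ (-s) -
        (2 * σ)⁻¹ * (lam k ^ (-(s + σ)) - lam k ^ (-(s - σ)))) * f k := by
      simp only [w, lp.coeFn_sub, lp.coeFn_smul, Pi.sub_apply, Pi.smul_apply, smul_eq_mul]
      rw [hu1 s (hunit s has hsb), hS (s + σ) (hunit _ (by linarith) hspb),
        hS (s - σ) (hunit _ hsma (by linarith))]
      ring
    rw [hwk, abs_mul]
    gcongr
    exact abs_centered_diff_rpow_neg_sub_deriv_le_div_cube hlam1 (hlam k) ha hσ hsma.le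
      (hspb.trans hb).le
  have hSs : ‖S s‖ ≤ M * ‖f‖ := by
    refine lp.norm_le_mul_of_forall_abs_le two_ne_zero (by positivity) fun k => ?_
    rw [hS s (hunit s has hsb) k, abs_mul,
      abs_of_pos (rpow_pos_of_pos (hlam1.trans_le (hlam k)) _)]
    gcongr
    exact rpow_neg_le_max_one_inv hlam1 (hlam k) (ha.trans has).le (hsb.trans hb).le
  calc _ = |⟪S s - ud, w⟫| := by rw [add_sub_add_right_eq_sub, inner_sub_right]
    _ ≤ ‖S s - ud‖ * ‖w‖ := abs_real_inner_le_norm _ _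
    _ ≤ (M * ‖f‖ + ‖ud‖) * (σ ^ 2 / 6 * ((6 + K) / a ^ 3) * ‖f‖) := by
      gcongr; exact (norm_sub_le _ _).trans (by linarith)
    _ = (M * ‖f‖ + ‖ud‖) * ((6 + K) / 6) * ‖f‖ * σ ^ 2 / a ^ 3 := by ring
    _ ≤ _ := by gcongr; linarith

/-- Uniform convergence of `j_σ` to `F'`: there is `C > 0`, depending only on `λ₁`, `‖f‖` and
`‖u_d‖`, such that `|F'(s) − j_σ(s)| ≤ C σ² a⁻³` for all admissible `s`, `σ`, where
`F'(s) = ⟨S(s) − u_d, u¹(s)⟩ + φ'(s)` and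
`j_σ(s) = ⟨S(s) − u_d, (S(s+σ) − S(s−σ))/(2σ)⟩ + φ'(s)`. -/
theorem jsigma_uniform_convergence (lam1 : ℝ) (hlam1 : 0 < lam1) (lam : ℕ → ℝ)
    (hlam : ∀ k, lam1 ≤ lam k) (f : lp (fun _ : ℕ => ℝ) 2)
    (S u1 : ℝ → lp (fun _ : ℕ => ℝ) 2)
    (hS : ∀ s ∈ Set.Ioo (0 : ℝ) 1, ∀ k, S s k = lam k ^ (-s) * f k)
    (hu1 : ∀ s ∈ Set.Ioo (0 : ℝ) 1, ∀ k,
      u1 s k = -(Real.log (lam k)) * lam k ^ (-s) * f k)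
    (ud : lp (fun _ : ℕ => ℝ) 2)
    (a b : ℝ) (ha : 0 < a) (hab : a < b) (hb : b < 1)
    (φ φ' : ℝ → ℝ) (hφ0 : ∀ s ∈ Set.Ioo a b, 0 ≤ φ s)
    (hφconv : ConvexOn ℝ (Set.Ioo a b) φ)
    (hφd : ∀ s ∈ Set.Ioo a b, HasDerivAt φ (φ' s) s)
    (hφa : Tendsto φ (nhdsWithin a (Set.Ioi a)) atTop)
    (hφb : Tendsto φ (nhdsWithin b (Set.Iio b)) atTop) :
    ∃ C : ℝ, 0 < C ∧
      ∀ σ : ℝ, 0 < σ → ∀ s ∈ Set.Ioo a b,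
        s + σ ∈ Set.Ioo a b → s - σ ∈ Set.Ioo a b →
        |(⟪S s - ud, u1 s⟫ + φ' s) -
            (⟪S s - ud, (2 * σ)⁻¹ • (S (s + σ) - S (s - σ))⟫ + φ' s)| ≤
          C * σ ^ 2 / a ^ 3 :=
  jsigma_uniform_convergence_general lam1 hlam1 lam hlam f S u1 hS hu1 ud a b ha hb φ'
end

section
/- Assume 0 < a < b < 1. Let (σ_j) be a sequence of positive numbers with σ_j → 0 and let (s_j) ⊂ (a,b) satisfy s_j ± σ_j ∈ (a,b) and j_{σ_j}(s_j) = 0 for every j. If s_j → s̄ with s̄ ∈ (a,b), then F'(s̄) = 0, where F'(s) = ⟨S(s) − u_d, u^{(1)}(s)⟩ + φ'(s) is the derivative of the reduced cost functional. -/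
/-!
Each coordinate of `S` is `t ↦ λ_k ^ (-t) f_k`, whose first and second derivatives in `t` are
bounded by `C |f_k|` uniformly in `k` on `[a, b]`, because `(1 + log² x) x ^ (-t)` is bounded for
`x ≥ λ₁ > 0` and `t ≥ a > 0`. Hence `S` is Lipschitz on `(a, b)`, and by the mean value theorem
`‖d_σ u(s) - u⁽¹⁾(s̄)‖ ≤ C ‖f‖ (σ + |s - s̄|)`. Letting `j → ∞` in `j_{σ_j}(s_j) = 0` gives
`F'(s̄) = 0`.
-/

open Real Filter Set Topology
open scoped RealInnerProductSpace ENNReal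

theorem lp.norm_le_mul_norm_of_forall_le {α : Type*} {E : α → Type*}
    [∀ i, NormedAddCommGroup (E i)] [∀ i, NormedSpace ℝ (E i)] {p : ℝ≥0∞} (hp : p ≠ 0)
    {x y : lp E p} {C : ℝ} (hC : 0 ≤ C) (h : ∀ i, ‖x i‖ ≤ C * ‖y i‖) : ‖x‖ ≤ C * ‖y‖ :=
  calc ‖x‖ ≤ ‖C • y‖ := lp.norm_mono hp fun i => by
        simpa [norm_smul, abs_of_nonneg hC] using h i
    _ ≤ C * ‖y‖ := by simpa [abs_of_nonneg hC] using lp.norm_const_smul_le hp C y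

theorem exists_one_add_log_sq_mul_rpow_neg_le {lam1 a : ℝ} (b : ℝ) (hlam1 : 0 < lam1)
    (ha : 0 < a) :
    ∃ M, 0 ≤ M ∧ ∀ x, lam1 ≤ x → ∀ t ∈ Icc a b, (1 + log x ^ 2) * x ^ (-t) ≤ M := by
  refine ⟨max (1 + 2 / a ^ 2) ((1 + log lam1 ^ 2) * exp (-(b * log lam1))),
    le_max_of_le_left (by positivity), fun x hx t ht => ?_⟩
  have hlog : log lam1 ≤ log x := log_le_log hlam1 hx
  rw [rpow_def_of_pos (hlam1.trans_le hx)]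
  set L := log x
  rcases le_total 0 L with hL | hL
  · have hexp := quadratic_le_exp_of_nonneg (mul_nonneg ha.le hL)
    have hquad : 1 + L ^ 2 ≤ (1 + 2 / a ^ 2) * exp (a * L) :=
      calc 1 + L ^ 2 ≤ (1 + 2 / a ^ 2) * (1 + (a * L) ^ 2 / 2) := by
            field_simp; nlinarith [sq_nonneg (a * L)]
        _ ≤ (1 + 2 / a ^ 2) * exp (a * L) := by
            gcongr; linarith [mul_nonneg ha.le hL]
    refine le_max_of_le_left ?_
    calc (1 + L ^ 2) * exp (L * -t) ≤ (1 + 2 / a ^ 2) * exp (a * L) * exp (-(a * L)) := by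
          gcongr
          nlinarith [ht.1]
      _ = 1 + 2 / a ^ 2 := by rw [mul_assoc, ← exp_add]; simp
  · refine le_max_of_le_right (mul_le_mul ?_ ?_ (exp_pos _).le (by positivity))
    · nlinarith
    · exact exp_le_exp.2 (by nlinarith [ht.1, ht.2])

section RpowNeg

variable {x : ℝ}

theorem hasDerivAt_rpow_neg_mul (hx : 0 < x) (c t : ℝ) :
    HasDerivAt (fun t => x ^ (-t) * c) (-log x * x ^ (-t) * c) t := by
  have := ((hasStrictDerivAt_const_rpow hx (-t)).hasDerivAt.comp t (hasDerivAt_neg t)).mul_const c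
  exact this.congr_deriv (by ring)

theorem abs_rpow_neg_mul_sub_le {s : Set ℝ} (hs : Convex ℝ s) (hx : 0 < x) {c M : ℝ}
    (hM : ∀ t ∈ s, |log x * c| * x ^ (-t) ≤ M) {y z : ℝ} (hy : y ∈ s) (hz : z ∈ s) :
    |x ^ (-y) * c - x ^ (-z) * c| ≤ M * |y - z| := by
  have hderiv (t : ℝ) (ht : t ∈ s) : ‖-log x * x ^ (-t) * c‖ ≤ M := by
    rw [Real.norm_eq_abs, show -log x * x ^ (-t) * c = -(log x * c * x ^ (-t)) by ring, abs_neg,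
      abs_mul, abs_of_pos (rpow_pos_of_pos hx _)]
    exact hM t ht
  simpa only [Real.norm_eq_abs] using hs.norm_image_sub_le_of_norm_hasDerivWithin_le
    (fun t _ => (hasDerivAt_rpow_neg_mul hx c t).hasDerivWithinAt) hderiv hz hy

end RpowNeg

theorem abs_centeredSlope_sub_deriv_le {g g' : ℝ → ℝ} {s : Set ℝ} (hs : Convex ℝ s) {M : ℝ}
    (hM : 0 ≤ M) (hg : ∀ t, HasDerivAt g (g' t) t)
    (hg' : ∀ y ∈ s, ∀ z ∈ s, |g' y - g' z| ≤ M * |y - z|) {r h z : ℝ} (hh : 0 < h)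
    (hm : r - h ∈ s) (hp : r + h ∈ s) (hz : z ∈ s) :
    |(2 * h)⁻¹ * (g (r + h) - g (r - h)) - g' z| ≤ M * (h + |r - z|) := by
  obtain ⟨ξ, hξ, hslope⟩ := exists_hasDerivAt_eq_slope g g' (by linarith : r - h < r + h)
    (fun t _ => (hg t).continuousAt.continuousWithinAt) (fun t _ => hg t)
  have hξs : ξ ∈ s := hs.ordConnected.out hm hp (Ioo_subset_Icc_self hξ)
  have hξr : |ξ - r| ≤ h := abs_sub_le_iff.2 ⟨by linarith [hξ.2], by linarith [hξ.1]⟩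
  calc |(2 * h)⁻¹ * (g (r + h) - g (r - h)) - g' z| = |g' ξ - g' z| := by
        rw [hslope, show r + h - (r - h) = 2 * h by ring, div_eq_inv_mul]
    _ ≤ M * |ξ - z| := hg' ξ hξs z hz
    _ ≤ M * (h + |r - z|) := by
        gcongr
        calc |ξ - z| = |(ξ - r) + (r - z)| := by ring_nf
          _ ≤ h + |r - z| := (abs_add_le _ _).trans (by linarith)

noncomputable def centralDiff {E : Type*} [AddCommGroup E] [Module ℝ E] (u : ℝ → E) (h s : ℝ) :
    E :=
  (2 * h)⁻¹ • (u (s + h) - u (s - h))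

section ControlToState

variable {lam1 a b : ℝ} {lam : ℕ → ℝ} {f : lp (fun _ : ℕ => ℝ) 2}

theorem continuousOn_of_apply_eq_rpow_neg_mul (hlam1 : 0 < lam1) (hlam : ∀ k, lam1 ≤ lam k)
    (ha : 0 < a) {S : ℝ → lp (fun _ : ℕ => ℝ) 2}
    (hS : ∀ s ∈ Ioo a b, ∀ k, S s k = lam k ^ (-s) * f k) : ContinuousOn S (Ioo a b) := by
  obtain ⟨M, hM0, hM⟩ := exists_one_add_log_sq_mul_rpow_neg_le b hlam1 ha
  refine (LipschitzOnWith.of_dist_le' (K := M * ‖f‖) fun s hs z hz => ?_).continuousOn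
  rw [dist_eq_norm, dist_eq_norm, mul_right_comm]
  refine lp.norm_le_mul_norm_of_forall_le two_ne_zero (by positivity) fun k => ?_
  have hx : 0 < lam k := hlam1.trans_le (hlam k)
  have hbound (t : ℝ) (ht : t ∈ Ioo a b) : |log (lam k) * f k| * lam k ^ (-t) ≤ M * |f k| := by
    have hpos := rpow_pos_of_pos hx (-t)
    have hL : |log (lam k)| ≤ 1 + log (lam k) ^ 2 := by
      nlinarith [sq_abs (log (lam k)), abs_nonneg (log (lam k))]
    calc |log (lam k) * f k| * lam k ^ (-t) = |f k| * (|log (lam k)| * lam k ^ (-t)) := by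
          rw [abs_mul]; ring
      _ ≤ |f k| * M := by
          gcongr
          exact (mul_le_mul_of_nonneg_right hL hpos.le).trans
            (hM (lam k) (hlam k) t (Ioo_subset_Icc_self ht))
      _ = M * |f k| := mul_comm _ _
  simp only [lp.coeFn_sub, Pi.sub_apply, Real.norm_eq_abs, hS s hs, hS z hz]
  exact (abs_rpow_neg_mul_sub_le (convex_Ioo a b) hx hbound hs hz).trans_eq (by ring)

theorem tendsto_centralDiff_of_apply_eq_rpow_neg_mul (hlam1 : 0 < lam1)
    (hlam : ∀ k, lam1 ≤ lam k) (ha : 0 < a) {S u1 : ℝ → lp (fun _ : ℕ => ℝ) 2}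
    (hS : ∀ s ∈ Ioo a b, ∀ k, S s k = lam k ^ (-s) * f k)
    (hu1 : ∀ s ∈ Ioo a b, ∀ k, u1 s k = -log (lam k) * lam k ^ (-s) * f k)
    {ι : Type*} {l : Filter ι} {s σ : ι → ℝ} {z : ℝ} (hσ : ∀ i, 0 < σ i)
    (hσ0 : Tendsto σ l (𝓝 0)) (hs : Tendsto s l (𝓝 z)) (hsp : ∀ i, s i + σ i ∈ Ioo a b)
    (hsm : ∀ i, s i - σ i ∈ Ioo a b) (hz : z ∈ Ioo a b) :
    Tendsto (fun i => centralDiff S (σ i) (s i)) l (𝓝 (u1 z)) := by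
  obtain ⟨M, hM0, hM⟩ := exists_one_add_log_sq_mul_rpow_neg_le b hlam1 ha
  have hcoord (i : ι) (k : ℕ) :
      ‖(centralDiff S (σ i) (s i) - u1 z) k‖ ≤ M * (σ i + |s i - z|) * ‖f k‖ := by
    have hx : 0 < lam k := hlam1.trans_le (hlam k)
    have hbound (t : ℝ) (ht : t ∈ Ioo a b) :
        |log (lam k) * (-log (lam k) * f k)| * lam k ^ (-t) ≤ M * |f k| := by
      calc |log (lam k) * (-log (lam k) * f k)| * lam k ^ (-t)
          = |f k| * (log (lam k) ^ 2 * lam k ^ (-t)) := by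
            rw [abs_mul, abs_mul, abs_neg, ← mul_assoc, abs_mul_abs_self]; ring
        _ ≤ |f k| * M := by
            gcongr
            exact (mul_le_mul_of_nonneg_right (by linarith) (rpow_pos_of_pos hx _).le).trans
              (hM (lam k) (hlam k) t (Ioo_subset_Icc_self ht))
        _ = M * |f k| := mul_comm _ _
    have hLip (y : ℝ) (hy : y ∈ Ioo a b) (w : ℝ) (hw : w ∈ Ioo a b) :
        |-log (lam k) * lam k ^ (-y) * f k - -log (lam k) * lam k ^ (-w) * f k|
          ≤ M * |f k| * |y - w| := by
      convert abs_rpow_neg_mul_sub_le (convex_Ioo a b) hx hbound hy hw using 3 <;> ring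
    have := abs_centeredSlope_sub_deriv_le (convex_Ioo a b) (by positivity)
      (hasDerivAt_rpow_neg_mul hx (f k)) hLip (hσ i) (hsm i) (hsp i) hz
    simp only [centralDiff, lp.coeFn_sub, lp.coeFn_smul, Pi.sub_apply, Pi.smul_apply,
      smul_eq_mul, Real.norm_eq_abs, hS _ (hsp i), hS _ (hsm i), hu1 z hz]
    linarith
  refine tendsto_iff_norm_sub_tendsto_zero.2 (squeeze_zero (fun _ => norm_nonneg _)
    (fun i => lp.norm_le_mul_norm_of_forall_le two_ne_zero ?_ (hcoord i)) ?_)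
  · have := hσ i
    positivity
  · simpa using ((hσ0.add (hs.sub_const z).abs).const_mul M).mul_const ‖f‖

end ControlToState

theorem roots_converge_to_critical_point_general (lam1 : ℝ) (hlam1 : 0 < lam1) (lam : ℕ → ℝ)
    (hlam : ∀ k, lam1 ≤ lam k) (f : lp (fun _ : ℕ => ℝ) 2)
    (S u1 : ℝ → lp (fun _ : ℕ => ℝ) 2)
    (hS : ∀ s ∈ Set.Ioo (0 : ℝ) 1, ∀ k, S s k = lam k ^ (-s) * f k)
    (hu1 : ∀ s ∈ Set.Ioo (0 : ℝ) 1, ∀ k,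
      u1 s k = -(Real.log (lam k)) * lam k ^ (-s) * f k)
    (ud : lp (fun _ : ℕ => ℝ) 2)
    (a b : ℝ) (ha : 0 < a) (hb : b < 1)
    (φ' : ℝ → ℝ)
    (hφdc : ContinuousOn φ' (Set.Ioo a b))
    (σ : ℕ → ℝ) (hσpos : ∀ j, 0 < σ j) (hσ0 : Tendsto σ atTop (nhds 0))
    (sj : ℕ → ℝ)
    (hsjp : ∀ j, sj j + σ j ∈ Set.Ioo a b) (hsjm : ∀ j, sj j - σ j ∈ Set.Ioo a b)
    (hroot : ∀ j,
      ⟪S (sj j) - ud, (2 * σ j)⁻¹ • (S (sj j + σ j) - S (sj j - σ j))⟫ + φ' (sj j) = 0)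
    (sbar : ℝ) (hsbar : sbar ∈ Set.Ioo a b)
    (hconv : Tendsto sj atTop (nhds sbar)) :
    ⟪S sbar - ud, u1 sbar⟫ + φ' sbar = 0 := by
  have hsub : Ioo a b ⊆ Ioo 0 1 := Ioo_subset_Ioo ha.le hb.le
  have hS' : ∀ s ∈ Ioo a b, ∀ k, S s k = lam k ^ (-s) * f k := fun s hs => hS s (hsub hs)
  have hu1' : ∀ s ∈ Ioo a b, ∀ k, u1 s k = -log (lam k) * lam k ^ (-s) * f k :=
    fun s hs => hu1 s (hsub hs)
  have hnhds : Ioo a b ∈ 𝓝 sbar := isOpen_Ioo.mem_nhds hsbar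
  have hSlim : Tendsto (fun j => S (sj j)) atTop (𝓝 (S sbar)) :=
    ((continuousOn_of_apply_eq_rpow_neg_mul hlam1 hlam ha hS').continuousAt hnhds).tendsto.comp
      hconv
  have hdlim := tendsto_centralDiff_of_apply_eq_rpow_neg_mul hlam1 hlam ha hS' hu1' hσpos hσ0
    hconv hsjp hsjm hsbar
  have hφlim := (hφdc.continuousAt hnhds).tendsto.comp hconv
  have hlim := ((hSlim.sub_const ud).inner hdlim).add hφlim
  exact tendsto_nhds_unique ((tendsto_congr hroot).1 hlim) tendsto_const_nhds

/-- Convergence of discrete roots: if `σ_j → 0`, `s_j ∈ (a,b)` are roots of `j_{σ_j}` with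
`s_j ± σ_j ∈ (a,b)`, and `s_j → s̄ ∈ (a,b)`, then `F'(s̄) = 0`, where
`F'(s) = ⟨S(s) − u_d, u¹(s)⟩ + φ'(s)`. -/
theorem roots_converge_to_critical_point (lam1 : ℝ) (hlam1 : 0 < lam1) (lam : ℕ → ℝ)
    (hlam : ∀ k, lam1 ≤ lam k) (f : lp (fun _ : ℕ => ℝ) 2)
    (S u1 : ℝ → lp (fun _ : ℕ => ℝ) 2)
    (hS : ∀ s ∈ Set.Ioo (0 : ℝ) 1, ∀ k, S s k = lam k ^ (-s) * f k)
    (hu1 : ∀ s ∈ Set.Ioo (0 : ℝ) 1, ∀ k,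
      u1 s k = -(Real.log (lam k)) * lam k ^ (-s) * f k)
    (ud : lp (fun _ : ℕ => ℝ) 2)
    (a b : ℝ) (ha : 0 < a) (hab : a < b) (hb : b < 1)
    (φ φ' : ℝ → ℝ) (hφ0 : ∀ s ∈ Set.Ioo a b, 0 ≤ φ s)
    (hφconv : ConvexOn ℝ (Set.Ioo a b) φ)
    (hφd : ∀ s ∈ Set.Ioo a b, HasDerivAt φ (φ' s) s)
    (hφdc : ContinuousOn φ' (Set.Ioo a b))
    (hφa : Tendsto φ (nhdsWithin a (Set.Ioi a)) atTop)
    (hφb : Tendsto φ (nhdsWithin b (Set.Iio b)) atTop)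
    (σ : ℕ → ℝ) (hσpos : ∀ j, 0 < σ j) (hσ0 : Tendsto σ atTop (nhds 0))
    (sj : ℕ → ℝ) (hsj : ∀ j, sj j ∈ Set.Ioo a b)
    (hsjp : ∀ j, sj j + σ j ∈ Set.Ioo a b) (hsjm : ∀ j, sj j - σ j ∈ Set.Ioo a b)
    (hroot : ∀ j,
      ⟪S (sj j) - ud, (2 * σ j)⁻¹ • (S (sj j + σ j) - S (sj j - σ j))⟫ + φ' (sj j) = 0)
    (sbar : ℝ) (hsbar : sbar ∈ Set.Ioo a b)
    (hconv : Tendsto sj atTop (nhds sbar)) :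
    ⟪S sbar - ud, u1 sbar⟫ + φ' sbar = 0 :=
  roots_converge_to_critical_point_general lam1 hlam1 lam hlam f S u1 hS hu1 ud a b ha hb φ' hφdc σ
    hσpos hσ0 sj hsjp hsjm hroot sbar hsbar hconv
end
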